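/- Let ÷ be an AGM contraction operator with contraction-compatible faithful assignment Ψ ↦ ≤_Ψ. Then ÷ satisfies (IC1): if ¬α ⊨ β then Bel(Ψ ÷ α ÷ β) =_α Bel(Ψ ÷ β), if and only if the assignment satisfies (IC1^rel): for all ω₁, ω₂ ⊨ α, ω₁ ≤_Ψ ω₂ iff ω₁ ≤_{Ψ÷α} ω₂. -/

import Mathlib

inductive Form (V : Type) : Type
  | var : V → Form V
  | falsum : Form V
  | imp : Form V → Form V → Form V

namespace Form

def eval {V : Type} (w : V → Bool) : Form V → Bool
  | var v => w v
  | falsum => false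
  | imp a b => !(eval w a) || eval w b

def neg {V : Type} (a : Form V) : Form V := imp a falsum

def top {V : Type} : Form V := neg falsum

def conj {V : Type} (a b : Form V) : Form V := neg (imp a (neg b))

end Form

/-- Worlds (propositional interpretations) over the signature `V`. -/
abbrev World (V : Type) := V → Bool

/-- Models of a single formula. -/
def FMod {V : Type} (a : Form V) : Set (World V) := {w | a.eval w = true}

/-- Models of a set of formulas. -/
def SMod {V : Type} (X : Set (Form V)) : Set (World V) := {w | ∀ a ∈ X, a.eval w = true}

/-- Deductive closure (consequence operator). -/
def Cn {V : Type} (X : Set (Form V)) : Set (Form V) := {b | ∀ w ∈ SMod X, b.eval w = true}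

/-- Minimal elements of a set of worlds w.r.t. a relation. -/
def minSet {V : Type} (S : Set (World V)) (r : World V → World V → Prop) : Set (World V) :=
  {w ∈ S | ∀ w' ∈ S, r w w'}

/-- Total preorder: total (hence reflexive) and transitive. -/
def TotalPre {V : Type} (r : World V → World V → Prop) : Prop :=
  (∀ x y, r x y ∨ r y x) ∧ (∀ x y z, r x y → r y z → r x z)

/-- A belief change operator over epistemic states `E`: each state has a
deductively closed belief set, and the operator maps a state and a formula to a state. -/
structure BCO (V E : Type) where
  Bel : E → Set (Form V)
  closed : ∀ Ψ, Cn (Bel Ψ) = Bel Ψ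
  op : E → Form V → E

/-- Models of (the belief set of) an epistemic state. -/
def stMod {V E : Type} (O : BCO V E) (Ψ : E) : Set (World V) := SMod (O.Bel Ψ)

/-- Faithful assignment: each `le Ψ` is a total preorder; models of `Ψ` are mutually
equivalent and strictly below non-models. -/
def Faithful {V E : Type} (O : BCO V E) (le : E → World V → World V → Prop) : Prop :=
  (∀ Ψ, TotalPre (le Ψ)) ∧
  (∀ Ψ w₁ w₂, w₁ ∈ stMod O Ψ → w₂ ∈ stMod O Ψ → le Ψ w₁ w₂) ∧
  (∀ Ψ w₁ w₂, w₁ ∈ stMod O Ψ → w₂ ∉ stMod O Ψ → (le Ψ w₁ w₂ ∧ ¬ le Ψ w₂ w₁))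

/-- Contraction-compatibility: `[[Ψ ÷ α]] = [[Ψ]] ∪ min([[¬α]], ≤_Ψ)`. -/
def ContrCompat {V E : Type} (O : BCO V E) (le : E → World V → World V → Prop) : Prop :=
  ∀ Ψ (α : Form V), stMod O (O.op Ψ α) = stMod O Ψ ∪ minSet (FMod α.neg) (le Ψ)

/-- Revision-compatibility: `[[Ψ * α]] = min([[α]], ≤_Ψ)`. -/
def RevCompat {V E : Type} (O : BCO V E) (le : E → World V → World V → Prop) : Prop :=
  ∀ Ψ (α : Form V), stMod O (O.op Ψ α) = minSet (FMod α) (le Ψ)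

/-- The AGM contraction postulates (C1)–(C7) for epistemic states. -/
def AGMContr {V E : Type} (O : BCO V E) : Prop :=
  (∀ Ψ α, O.Bel (O.op Ψ α) ⊆ O.Bel Ψ) ∧
  (∀ Ψ α, α ∉ O.Bel Ψ → O.Bel Ψ ⊆ O.Bel (O.op Ψ α)) ∧
  (∀ Ψ (α : Form V), ¬ (∀ w, w ∈ FMod α) → α ∉ O.Bel (O.op Ψ α)) ∧
  (∀ Ψ α, O.Bel Ψ ⊆ Cn (O.Bel (O.op Ψ α) ∪ {α})) ∧
  (∀ Ψ α β, FMod α = FMod β → O.Bel (O.op Ψ α) = O.Bel (O.op Ψ β)) ∧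
  (∀ Ψ (α β : Form V), O.Bel (O.op Ψ α) ∩ O.Bel (O.op Ψ β) ⊆ O.Bel (O.op Ψ (α.conj β))) ∧
  (∀ Ψ (α β : Form V), β ∉ O.Bel (O.op Ψ (α.conj β)) → O.Bel (O.op Ψ (α.conj β)) ⊆ O.Bel (O.op Ψ β))

/-- Unbiasedness: every consistent set of formulas has an epistemic state whose
belief set is its deductive closure. -/
def Unbiased {V E : Type} (O : BCO V E) : Prop :=
  ∀ L : Set (Form V), (SMod L).Nonempty → ∃ Ψ : E, O.Bel Ψ = Cn L

/-!
By contraction-compatibility, inside `[[α]]` the state `Ψ ÷ α` has the same models as `Ψ`,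
and when `[[¬β]] ⊆ [[α]]` a further contraction by `β` only adds the minimal `¬β`-worlds.
So (IC1) says that `≤_Ψ` and `≤_{Ψ÷α}` have the same minimal elements on every definable
subset of `[[α]]`, which follows from (IC1ʳᵉˡ). Conversely, for `ω₁, ω₂ ⊨ α` take `β` with
`[[¬β]] = {ω₁, ω₂}` (definable as `V` is finite): whether `ω₁` is minimal in it compares
`ω₁` with `ω₂`, unless `ω₁ ⊨ Ψ`, in which case faithfulness puts `ω₁` below everything
for both orders.
-/

namespace Form

variable {V : Type}

lemma FMod_falsum : FMod (falsum : Form V) = ∅ := by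
  ext w; simp [FMod, eval]

lemma FMod_var (v : V) : FMod (var v) = {w | w v = true} := rfl

lemma FMod_imp (a b : Form V) : FMod (imp a b) = (FMod a)ᶜ ∪ FMod b := by
  ext w; simp [FMod, eval]

lemma FMod_neg (a : Form V) : FMod a.neg = (FMod a)ᶜ := by
  simp [neg, FMod_imp, FMod_falsum]

lemma FMod_top : FMod (top : Form V) = Set.univ := by
  simp [top, FMod_neg, FMod_falsum]

lemma FMod_conj (a b : Form V) : FMod (a.conj b) = FMod a ∩ FMod b := by
  simp [conj, FMod_neg, FMod_imp, Set.compl_union]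

lemma FMod_neg_subset_comm {a b : Form V} : FMod a.neg ⊆ FMod b ↔ FMod b.neg ⊆ FMod a := by
  rw [FMod_neg, FMod_neg]
  exact Set.compl_subset_comm

end Form

open Form

section Definability

variable {V : Type}

lemma exists_FMod_eq_setOf_agree (ω : World V) {t : Set V} (ht : t.Finite) :
    ∃ φ : Form V, FMod φ = {w | ∀ v ∈ t, w v = ω v} := by
  induction t, ht using Set.Finite.induction_on with
  | empty => exact ⟨top, by simp [FMod_top]⟩
  | @insert v t _ _ ih =>
    obtain ⟨φ, hφ⟩ := ih
    have hlit : ∃ ψ : Form V, FMod ψ = {w | w v = ω v} := by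
      cases hv : ω v
      · exact ⟨(var v).neg, by ext w; simp [FMod_neg, FMod_var]⟩
      · exact ⟨var v, by ext w; simp [FMod_var]⟩
    obtain ⟨ψ, hψ⟩ := hlit
    refine ⟨ψ.conj φ, ?_⟩
    ext w
    simp [FMod_conj, hψ, hφ]

lemma exists_FMod_eq_singleton [Finite V] (ω : World V) : ∃ φ : Form V, FMod φ = {ω} := by
  obtain ⟨φ, hφ⟩ := exists_FMod_eq_setOf_agree ω (Set.finite_univ (α := V))
  exact ⟨φ, by ext w; simp [hφ, funext_iff]⟩

lemma exists_FMod_eq [Finite V] (s : Set (World V)) : ∃ φ : Form V, FMod φ = s := by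
  induction s, s.toFinite using Set.Finite.induction_on with
  | empty => exact ⟨falsum, FMod_falsum⟩
  | @insert ω s _ _ ih =>
    obtain ⟨φ, hφ⟩ := ih
    obtain ⟨ψ, hψ⟩ := exists_FMod_eq_singleton ω
    exact ⟨imp ψ.neg φ, by rw [FMod_imp, FMod_neg, compl_compl, hψ, hφ, Set.singleton_union]⟩

end Definability

section MinSet

variable {V : Type} {S : Set (World V)} {r r' : World V → World V → Prop}

lemma TotalPre.refl (hr : TotalPre r) (w : World V) : r w w :=
  (hr.1 w w).elim id id

lemma minSet_subset : minSet S r ⊆ S := fun _ hw => hw.1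

lemma minSet_congr (h : ∀ x ∈ S, ∀ y ∈ S, r x y ↔ r' x y) : minSet S r = minSet S r' := by
  ext w
  exact and_congr_right fun hw => forall₂_congr fun y hy => h w hw y hy

lemma mem_minSet_pair_iff (hr : ∀ w, r w w) {w₁ w₂ : World V} :
    w₁ ∈ minSet {w₁, w₂} r ↔ r w₁ w₂ := by
  simp [minSet, hr]

end MinSet

section Contraction

variable {V E : Type} {O : BCO V E} {le : E → World V → World V → Prop}

lemma Faithful.le_of_mem (hF : Faithful O le) {Ψ : E} {w₁ : World V} (h₁ : w₁ ∈ stMod O Ψ)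
    (w₂ : World V) : le Ψ w₁ w₂ := by
  by_cases h₂ : w₂ ∈ stMod O Ψ
  · exact hF.2.1 Ψ w₁ w₂ h₁ h₂
  · exact (hF.2.2 Ψ w₁ w₂ h₁ h₂).1

lemma ContrCompat.stMod_op_inter (hC : ContrCompat O le) (Ψ : E) {α : Form V}
    {A : Set (World V)} (hα : FMod α.neg ⊆ A) :
    stMod O (O.op Ψ α) ∩ A = stMod O Ψ ∩ A ∪ minSet (FMod α.neg) (le Ψ) := by
  rw [hC, Set.union_inter_distrib_right, Set.inter_eq_left.2 (minSet_subset.trans hα)]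

lemma ContrCompat.stMod_op_inter_self (hC : ContrCompat O le) (Ψ : E) (α : Form V) :
    stMod O (O.op Ψ α) ∩ FMod α = stMod O Ψ ∩ FMod α := by
  have hdisj : Disjoint (minSet (FMod α.neg) (le Ψ)) (FMod α) := by
    rw [FMod_neg]; exact disjoint_compl_left.mono_left minSet_subset
  rw [hC, Set.union_inter_distrib_right, hdisj.inter_eq, Set.union_empty]

lemma ContrCompat.stMod_subset_op (hC : ContrCompat O le) (Ψ : E) (α : Form V) :
    stMod O Ψ ⊆ stMod O (O.op Ψ α) :=
  hC Ψ α ▸ Set.subset_union_left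

lemma ContrCompat.stMod_op_op_inter (hC : ContrCompat O le) (Ψ : E) {α β : Form V}
    (hβ : FMod β.neg ⊆ FMod α) :
    stMod O (O.op (O.op Ψ α) β) ∩ FMod α =
      stMod O Ψ ∩ FMod α ∪ minSet (FMod β.neg) (le (O.op Ψ α)) := by
  rw [hC.stMod_op_inter _ hβ, hC.stMod_op_inter_self]

end Contraction

theorem stmt_16_general {V E : Type} [Fintype V] (O : BCO V E)
    (le : E → World V → World V → Prop)
    (hF : Faithful O le) (hC : ContrCompat O le) :
    (∀ (Ψ : E) (α β : Form V), FMod α.neg ⊆ FMod β →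
        SMod (O.Bel (O.op (O.op Ψ α) β)) ∩ FMod α = SMod (O.Bel (O.op Ψ β)) ∩ FMod α) ↔
    (∀ (Ψ : E) (α : Form V) (ω₁ ω₂ : World V),
        ω₁ ∈ FMod α → ω₂ ∈ FMod α → (le Ψ ω₁ ω₂ ↔ le (O.op Ψ α) ω₁ ω₂)) := by
  constructor
  · intro hIC1 Ψ α ω₁ ω₂ h₁ h₂
    by_cases hΨ : ω₁ ∈ stMod O Ψ
    · exact iff_of_true (hF.le_of_mem hΨ ω₂) (hF.le_of_mem (hC.stMod_subset_op Ψ α hΨ) ω₂)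
    obtain ⟨β, hβ⟩ := exists_FMod_eq ({ω₁, ω₂}ᶜ : Set (World V))
    have hβneg : FMod β.neg = {ω₁, ω₂} := by rw [FMod_neg, hβ, compl_compl]
    have hsub : FMod β.neg ⊆ FMod α := hβneg ▸ Set.pair_subset h₁ h₂
    have key : stMod O (O.op (O.op Ψ α) β) ∩ FMod α = stMod O (O.op Ψ β) ∩ FMod α :=
      hIC1 Ψ α β (FMod_neg_subset_comm.2 hsub)
    rw [hC.stMod_op_op_inter Ψ hsub, hC.stMod_op_inter Ψ hsub, hβneg] at key
    have hω₁ : ω₁ ∉ stMod O Ψ ∩ FMod α := fun h => hΨ h.1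
    have hmem := Set.ext_iff.1 key ω₁
    rwa [Set.mem_union, Set.mem_union, or_iff_right hω₁, or_iff_right hω₁,
      mem_minSet_pair_iff (hF.1 _).refl, mem_minSet_pair_iff (hF.1 _).refl, Iff.comm] at hmem
  · intro hrel Ψ α β hαβ
    have hsub := FMod_neg_subset_comm.1 hαβ
    change stMod O (O.op (O.op Ψ α) β) ∩ FMod α = stMod O (O.op Ψ β) ∩ FMod α
    rw [hC.stMod_op_op_inter Ψ hsub, hC.stMod_op_inter Ψ hsub,
      minSet_congr fun x hx y hy => (hrel Ψ α x y (hsub hx) (hsub hy)).symm]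

/-- (IC1) holds iff the assignment satisfies (IC1ʳᵉˡ). -/
theorem stmt_16 {V E : Type} [Fintype V] (O : BCO V E)
    (le : E → World V → World V → Prop)
    (hA : AGMContr O) (hF : Faithful O le) (hC : ContrCompat O le) :
    (∀ (Ψ : E) (α β : Form V), FMod α.neg ⊆ FMod β →
        SMod (O.Bel (O.op (O.op Ψ α) β)) ∩ FMod α = SMod (O.Bel (O.op Ψ β)) ∩ FMod α) ↔
    (∀ (Ψ : E) (α : Form V) (ω₁ ω₂ : World V),
        ω₁ ∈ FMod α → ω₂ ∈ FMod α → (le Ψ ω₁ ω₂ ↔ le (O.op Ψ α) ω₁ ω₂)) :=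
  stmt_16_general O le hF hC
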